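/- Let P be a real symmetric n×n positive definite matrix and G an n×l real matrix with γ² I − Gᵀ P G positive definite. Then the function w ↦ −γ² ‖w‖² + (v + G w)ᵀ P (v + G w) attains its maximum over w ∈ ℝˡ at w* = (γ² I − Gᵀ P G)⁻¹ Gᵀ P v, and the maximum value equals vᵀ (P + P G (γ² I − Gᵀ P G)⁻¹ Gᵀ P) v. -/

import Mathlib

/-!
With `S = γ²I − GᵀPG` and `b = GᵀPv`, the objective is `vᵀPv + 2 wᵀb − wᵀSw`. Completing the square
around `w* = S⁻¹b` writes it as `f(w*) − (w − w*)ᵀS(w − w*)`, so positivity of `S` makes `w*` the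
maximiser, with value `vᵀPv + bᵀS⁻¹b = vᵀ(P + PGS⁻¹GᵀP)v`.
-/

open Matrix

section Quadratic

variable {ι κ : Type*} [Fintype ι] [Fintype κ]

lemma Matrix.IsSymm.dotProduct_mulVec_comm {S : Matrix ι ι ℝ} (hS : S.IsSymm) (x y : ι → ℝ) :
    x ⬝ᵥ S *ᵥ y = y ⬝ᵥ S *ᵥ x := by
  rw [dotProduct_mulVec, ← mulVec_transpose, hS.eq, dotProduct_comm]

lemma dotProduct_transpose_mul_mul_mulVec (A : Matrix ι κ ℝ) (M : Matrix ι ι ℝ) (v : κ → ℝ) :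
    v ⬝ᵥ (Aᵀ * M * A) *ᵥ v = A *ᵥ v ⬝ᵥ M *ᵥ (A *ᵥ v) := by
  rw [← mulVec_mulVec, ← mulVec_mulVec, dotProduct_mulVec, vecMul_transpose]

lemma quadratic_sub_quadratic_eq {S : Matrix ι ι ℝ} (hS : S.IsSymm) {b w₀ : ι → ℝ}
    (hw₀ : S *ᵥ w₀ = b) (c : ℝ) (w : ι → ℝ) :
    (c + 2 * (w₀ ⬝ᵥ b) - w₀ ⬝ᵥ S *ᵥ w₀) - (c + 2 * (w ⬝ᵥ b) - w ⬝ᵥ S *ᵥ w) =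
      (w - w₀) ⬝ᵥ S *ᵥ (w - w₀) := by
  rw [mulVec_sub, dotProduct_sub, sub_dotProduct, sub_dotProduct, hw₀,
    hS.dotProduct_mulVec_comm w₀ w, hw₀]
  ring

lemma quadratic_le_quadratic_of_mulVec_eq {S : Matrix ι ι ℝ} (hS : S.PosSemidef)
    {b w₀ : ι → ℝ} (hw₀ : S *ᵥ w₀ = b) (c : ℝ) (w : ι → ℝ) :
    c + 2 * (w ⬝ᵥ b) - w ⬝ᵥ S *ᵥ w ≤ c + 2 * (w₀ ⬝ᵥ b) - w₀ ⬝ᵥ S *ᵥ w₀ := by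
  have hsq := quadratic_sub_quadratic_eq (isHermitian_iff_isSymm.mp hS.isHermitian) hw₀ c w
  have hnonneg : 0 ≤ (w - w₀) ⬝ᵥ S *ᵥ (w - w₀) := by
    simpa using hS.dotProduct_mulVec_nonneg (w - w₀)
  linarith

lemma neg_sq_mul_dotProduct_add_dotProduct_mulVec_eq [DecidableEq ι] (γ : ℝ) {P : Matrix κ κ ℝ}
    (hP : P.IsSymm) (G : Matrix κ ι ℝ) (v : κ → ℝ) (w : ι → ℝ) :
    -γ ^ 2 * (w ⬝ᵥ w) + (v + G *ᵥ w) ⬝ᵥ P *ᵥ (v + G *ᵥ w) =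
      v ⬝ᵥ P *ᵥ v + 2 * (w ⬝ᵥ (Gᵀ * P) *ᵥ v) - w ⬝ᵥ (γ ^ 2 • 1 - Gᵀ * P * G) *ᵥ w := by
  have hcross : G *ᵥ w ⬝ᵥ P *ᵥ v = w ⬝ᵥ (Gᵀ * P) *ᵥ v := by
    rw [← mulVec_mulVec, dotProduct_mulVec w, vecMul_transpose]
  have hquad : G *ᵥ w ⬝ᵥ P *ᵥ (G *ᵥ w) = w ⬝ᵥ (Gᵀ * P * G) *ᵥ w :=
    (dotProduct_transpose_mul_mul_mulVec G P w).symm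
  rw [sub_mulVec, smul_mulVec, one_mulVec, dotProduct_sub, dotProduct_smul, smul_eq_mul,
    mulVec_add, dotProduct_add, add_dotProduct, add_dotProduct,
    hP.dotProduct_mulVec_comm v (G *ᵥ w), hcross, hquad]
  ring

end Quadratic

theorem stmt5_general {n l : ℕ} (γ : ℝ)
    (P : Matrix (Fin n) (Fin n) ℝ) (hP : P.PosSemidef)
    (G : Matrix (Fin n) (Fin l) ℝ)
    (hPD : (γ ^ 2 • (1 : Matrix (Fin l) (Fin l) ℝ) - Gᵀ * P * G).PosDef)
    (v : Fin n → ℝ) :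
    let f : (Fin l → ℝ) → ℝ := fun w =>
      -γ ^ 2 * (w ⬝ᵥ w) + (v + G.mulVec w) ⬝ᵥ P.mulVec (v + G.mulVec w)
    let wstar := ((γ ^ 2 • (1 : Matrix (Fin l) (Fin l) ℝ) - Gᵀ * P * G)⁻¹).mulVec
      ((Gᵀ * P).mulVec v)
    (∀ w, f w ≤ f wstar) ∧
      f wstar = v ⬝ᵥ (P + P * G * (γ ^ 2 • (1 : Matrix (Fin l) (Fin l) ℝ) - Gᵀ * P * G)⁻¹
        * Gᵀ * P).mulVec v := by
  intro f wstar
  set S := γ ^ 2 • (1 : Matrix (Fin l) (Fin l) ℝ) - Gᵀ * P * G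
  have hPsymm : P.IsSymm := isHermitian_iff_isSymm.mp hP.isHermitian
  have hf (w) : f w = v ⬝ᵥ P *ᵥ v + 2 * (w ⬝ᵥ (Gᵀ * P) *ᵥ v) - w ⬝ᵥ S *ᵥ w :=
    neg_sq_mul_dotProduct_add_dotProduct_mulVec_eq γ hPsymm G v w
  have hwstar : S *ᵥ wstar = (Gᵀ * P) *ᵥ v := by
    rw [mulVec_mulVec, mul_nonsing_inv S hPD.det_pos.ne'.isUnit, one_mulVec]
  refine ⟨fun w => ?_, ?_⟩
  · rw [hf, hf]
    exact quadratic_le_quadratic_of_mulVec_eq hPD.posSemidef hwstar _ w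
  · have hvalue : v ⬝ᵥ (P * G * S⁻¹ * Gᵀ * P) *ᵥ v = wstar ⬝ᵥ (Gᵀ * P) *ᵥ v := by
      have hsandwich : P * G * S⁻¹ * Gᵀ * P = (Gᵀ * P)ᵀ * S⁻¹ * (Gᵀ * P) := by
        rw [transpose_mul, transpose_transpose, hPsymm.eq]
        simp only [Matrix.mul_assoc]
      rw [hsandwich, dotProduct_transpose_mul_mul_mulVec, dotProduct_comm]
    rw [hf, hwstar, add_mulVec, dotProduct_add, hvalue]
    ring

/-- The strictly concave quadratic `w ↦ −γ²‖w‖² + (v+Gw)ᵀP(v+Gw)` attains its maximum at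
`w* = (γ²I − GᵀPG)⁻¹ GᵀP v`, with maximum value `vᵀ(P + PG(γ²I − GᵀPG)⁻¹GᵀP)v`. -/
theorem stmt5 {n l : ℕ} (γ : ℝ) (hγ : 0 < γ)
    (P : Matrix (Fin n) (Fin n) ℝ) (hP : P.PosSemidef)
    (G : Matrix (Fin n) (Fin l) ℝ)
    (hPD : (γ ^ 2 • (1 : Matrix (Fin l) (Fin l) ℝ) - Gᵀ * P * G).PosDef)
    (v : Fin n → ℝ) :
    let f : (Fin l → ℝ) → ℝ := fun w =>
      -γ ^ 2 * (w ⬝ᵥ w) + (v + G.mulVec w) ⬝ᵥ P.mulVec (v + G.mulVec w)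
    let wstar := ((γ ^ 2 • (1 : Matrix (Fin l) (Fin l) ℝ) - Gᵀ * P * G)⁻¹).mulVec
      ((Gᵀ * P).mulVec v)
    (∀ w, f w ≤ f wstar) ∧
      f wstar = v ⬝ᵥ (P + P * G * (γ ^ 2 • (1 : Matrix (Fin l) (Fin l) ℝ) - Gᵀ * P * G)⁻¹
        * Gᵀ * P).mulVec v :=
  stmt5_general γ P hP G hPD v
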